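/- Let R and B be finite sets of points in ℝ² in general position, and let W be a wedge bounded by lines ℓ₁, ℓ₂ such that at least one point of B is correctly classified by W (i.e. lies in closure(W)) and at least one point of R is correctly classified by W (i.e. lies outside interior(W)). Then there exist lines ℓ₁' and ℓ₂', each containing at least one point of R and at least one point of B, and a wedge W' bounded by ℓ₁' and ℓ₂', such that E(W') ⊆ E(W). -/

import Mathlib

open Classical

noncomputable section

/-- Points in the plane. -/
abbrev Pt : Type := EuclideanSpace ℝ (Fin 2)

/-- The closed halfplane `{x : ⟪v, x⟫ ≤ c}`, bounded by the line `{x : ⟪v, x⟫ = c}`. -/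
def halfplane (v : Pt) (c : ℝ) : Set Pt := {x | (inner ℝ v x : ℝ) ≤ c}

/-- The misclassified points: red points in the interior of `W` together with
blue points outside the closure of `W`. -/
def errSet (R B : Finset Pt) (W : Set Pt) : Finset Pt :=
  (R.filter fun p => p ∈ interior W) ∪ (B.filter fun p => p ∉ closure W)

/-- General position: no three points collinear, and pairwise distinct
`x`-coordinates. -/
def GenPos (P : Finset Pt) : Prop :=
  (∀ p ∈ P, ∀ q ∈ P, ∀ r ∈ P, p ≠ q → p ≠ r → q ≠ r →
      ¬ Collinear ℝ ({p, q, r} : Set Pt)) ∧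
  (∀ p ∈ P, ∀ q ∈ P, p ≠ q → p 0 ≠ q 0)

/-!
Let `P` be the blue points of `W` and `Qᵢ` the red points not strictly inside the halfplane
bounded by `ℓᵢ`. Then `ℓᵢ` weakly separates `P` from `Qᵢ`, and a weak separator of two nonempty
finite sets can be turned into one through a point of each: the gap
`min_{q ∈ Q} ⟪u, q⟫ - max_{p ∈ P} ⟪u, p⟫` is continuous in the normal `u`, nonnegative at the
normal of `ℓᵢ` and negative at `p - q`, so it vanishes on the connected set `ℝ² \ {0}`.
Replacing both `ℓᵢ` by such separators keeps every blue point of `W` in the wedge and every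
correctly classified red point out of its interior. If one `Qᵢ` is empty, the other new line is
used twice.
-/

open scoped RealInnerProductSpace

section Separator

variable {E : Type*} [NormedAddCommGroup E] [InnerProductSpace ℝ E]

def WeaklySeparates (P Q : Finset E) (w : E) (d : ℝ) : Prop :=
  (∀ p ∈ P, ⟪w, p⟫ ≤ d) ∧ ∀ q ∈ Q, d ≤ ⟪w, q⟫

def PassesThrough (P Q : Finset E) (w : E) (d : ℝ) : Prop :=
  (∃ p ∈ P, ⟪w, p⟫ = d) ∧ ∃ q ∈ Q, ⟪w, q⟫ = d

lemma PassesThrough.mono_right {P Q Q' : Finset E} {w : E} {d : ℝ}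
    (h : PassesThrough P Q w d) (hQ : Q ⊆ Q') : PassesThrough P Q' w d :=
  ⟨h.1, h.2.imp fun _ hq => ⟨hQ hq.1, hq.2⟩⟩

def separationGap (P Q : Finset E) (hP : P.Nonempty) (hQ : Q.Nonempty) (u : E) : ℝ :=
  Q.inf' hQ (⟪u, ·⟫) - P.sup' hP (⟪u, ·⟫)

variable {P Q : Finset E} (hP : P.Nonempty) (hQ : Q.Nonempty)

lemma continuous_separationGap : Continuous (separationGap P Q hP hQ) := by
  unfold separationGap
  fun_prop

lemma WeaklySeparates.separationGap_nonneg {v : E} {c : ℝ} (h : WeaklySeparates P Q v c) :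
    0 ≤ separationGap P Q hP hQ v :=
  sub_nonneg.2 ((Finset.sup'_le _ _ h.1).trans (Finset.le_inf' _ _ h.2))

lemma separationGap_sub_neg {p q : E} (hp : p ∈ P) (hq : q ∈ Q) (hpq : p ≠ q) :
    separationGap P Q hP hQ (p - q) < 0 := by
  have hq_le : Q.inf' hQ (⟪p - q, ·⟫) ≤ ⟪p - q, q⟫ := Finset.inf'_le _ hq
  have hp_le : ⟪p - q, p⟫ ≤ P.sup' hP (⟪p - q, ·⟫) := Finset.le_sup' (⟪p - q, ·⟫) hp
  have hnorm : 0 < ⟪p - q, p - q⟫ := real_inner_self_pos.2 (sub_ne_zero.2 hpq)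
  rw [inner_sub_right] at hnorm
  unfold separationGap
  linarith

lemma exists_weaklySeparates_passesThrough_of_separationGap_eq_zero {w : E}
    (hw : separationGap P Q hP hQ w = 0) :
    ∃ d, WeaklySeparates P Q w d ∧ PassesThrough P Q w d := by
  have hinf : Q.inf' hQ (⟪w, ·⟫) = P.sup' hP (⟪w, ·⟫) := sub_eq_zero.1 hw
  obtain ⟨p, hp, hp_eq⟩ := Finset.exists_mem_eq_sup' hP (⟪w, ·⟫)
  obtain ⟨q, hq, hq_eq⟩ := Finset.exists_mem_eq_inf' hQ (⟪w, ·⟫)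
  refine ⟨P.sup' hP (⟪w, ·⟫), ⟨fun p hp => Finset.le_sup' _ hp, fun q hq => ?_⟩,
    ⟨p, hp, hp_eq.symm⟩, ⟨q, hq, by rw [← hinf, hq_eq]⟩⟩
  exact hinf ▸ Finset.inf'_le _ hq

theorem WeaklySeparates.exists_passesThrough (hE : 1 < Module.rank ℝ E) (hP : P.Nonempty)
    (hQ : Q.Nonempty) {v : E} (hv : v ≠ 0) {c : ℝ} (h : WeaklySeparates P Q v c) :
    ∃ w ≠ 0, ∃ d, WeaklySeparates P Q w d ∧ PassesThrough P Q w d := by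
  obtain ⟨p, hp⟩ := hP
  obtain ⟨q, hq⟩ := hQ
  by_cases hpq : p = q
  · subst hpq
    have hc : ⟪v, p⟫ = c := le_antisymm (h.1 p hp) (h.2 p hq)
    exact ⟨v, hv, c, h, ⟨p, hp, hc⟩, ⟨p, hq, hc⟩⟩
  obtain ⟨w, hw, hw_gap⟩ :=
    (isConnected_compl_singleton_of_one_lt_rank hE 0).isPreconnected.intermediate_value
      (sub_ne_zero.2 hpq) hv (continuous_separationGap ⟨p, hp⟩ ⟨q, hq⟩).continuousOn
      ⟨(separationGap_sub_neg ⟨p, hp⟩ ⟨q, hq⟩ hp hq hpq).le, h.separationGap_nonneg _ _⟩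
  exact ⟨w, hw, exists_weaklySeparates_passesThrough_of_separationGap_eq_zero _ _ hw_gap⟩

theorem exists_passesThrough_pair (hE : 1 < Module.rank ℝ E) {P Q Q₁ Q₂ : Finset E}
    (hP : P.Nonempty) (hQ : Q₁.Nonempty ∨ Q₂.Nonempty) (hQ₁ : Q₁ ⊆ Q) (hQ₂ : Q₂ ⊆ Q)
    {v₁ v₂ : E} (hv₁ : v₁ ≠ 0) (hv₂ : v₂ ≠ 0) {c₁ c₂ : ℝ}
    (h₁ : WeaklySeparates P Q₁ v₁ c₁) (h₂ : WeaklySeparates P Q₂ v₂ c₂) :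
    ∃ w₁ ≠ 0, ∃ w₂ ≠ 0, ∃ d₁ d₂, WeaklySeparates P Q₁ w₁ d₁ ∧ WeaklySeparates P Q₂ w₂ d₂ ∧
      PassesThrough P Q w₁ d₁ ∧ PassesThrough P Q w₂ d₂ := by
  rcases Q₂.eq_empty_or_nonempty with hQ₂_empty | hQ₂_ne
  · obtain ⟨w, hw, d, hsep, hthrough⟩ :=
      h₁.exists_passesThrough hE hP (by simpa [hQ₂_empty] using hQ) hv₁
    have hthrough' := hthrough.mono_right hQ₁
    exact ⟨w, hw, w, hw, d, d, hsep, ⟨hsep.1, by simp [hQ₂_empty]⟩, hthrough', hthrough'⟩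
  rcases Q₁.eq_empty_or_nonempty with hQ₁_empty | hQ₁_ne
  · obtain ⟨w, hw, d, hsep, hthrough⟩ := h₂.exists_passesThrough hE hP hQ₂_ne hv₂
    have hthrough' := hthrough.mono_right hQ₂
    exact ⟨w, hw, w, hw, d, d, ⟨hsep.1, by simp [hQ₁_empty]⟩, hsep, hthrough', hthrough'⟩
  obtain ⟨w₁, hw₁, d₁, hsep₁, hthrough₁⟩ := h₁.exists_passesThrough hE hP hQ₁_ne hv₁
  obtain ⟨w₂, hw₂, d₂, hsep₂, hthrough₂⟩ := h₂.exists_passesThrough hE hP hQ₂_ne hv₂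
  exact ⟨w₁, hw₁, w₂, hw₂, d₁, d₂, hsep₁, hsep₂, hthrough₁.mono_right hQ₁,
    hthrough₂.mono_right hQ₂⟩

end Separator

lemma isClosed_halfplane (v : Pt) (c : ℝ) : IsClosed (halfplane v c) :=
  isClosed_le (continuous_const.inner continuous_id) continuous_const

lemma interior_halfplane {v : Pt} (hv : v ≠ 0) (c : ℝ) :
    interior (halfplane v c) = {x | ⟪v, x⟫ < c} := by
  have hf : innerSL ℝ v ≠ 0 := by
    rw [← norm_ne_zero_iff, innerSL_apply_norm]
    exact norm_ne_zero_iff.2 hv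
  have h := ((innerSL ℝ v).isOpenMap_of_ne_zero hf).preimage_interior_eq_interior_preimage
    (innerSL ℝ v).continuous (Set.Iic c)
  rw [interior_Iic] at h
  exact h.symm

lemma closure_wedge (v₁ v₂ : Pt) (c₁ c₂ : ℝ) :
    closure (halfplane v₁ c₁ ∩ halfplane v₂ c₂) = halfplane v₁ c₁ ∩ halfplane v₂ c₂ :=
  ((isClosed_halfplane v₁ c₁).inter (isClosed_halfplane v₂ c₂)).closure_eq

lemma interior_wedge {v₁ v₂ : Pt} (hv₁ : v₁ ≠ 0) (hv₂ : v₂ ≠ 0) (c₁ c₂ : ℝ) :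
    interior (halfplane v₁ c₁ ∩ halfplane v₂ c₂) = {x | ⟪v₁, x⟫ < c₁} ∩ {x | ⟪v₂, x⟫ < c₂} := by
  rw [interior_inter, interior_halfplane hv₁, interior_halfplane hv₂]

lemma errSet_subset_errSet {R B : Finset Pt} {W W' : Set Pt}
    (hR : ∀ r ∈ R, r ∈ interior W' → r ∈ interior W)
    (hB : ∀ b ∈ B, b ∈ closure W → b ∈ closure W') : errSet R B W' ⊆ errSet R B W := by
  intro x hx
  simp only [errSet, Finset.mem_union, Finset.mem_filter] at hx ⊢
  rcases hx with ⟨hxR, hx⟩ | ⟨hxB, hx⟩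
  · exact Or.inl ⟨hxR, hR x hxR hx⟩
  · exact Or.inr ⟨hxB, mt (hB x hxB) hx⟩

lemma errSet_wedge_subset {R B : Finset Pt} {v₁ v₂ w₁ w₂ : Pt} (hv₁ : v₁ ≠ 0) (hv₂ : v₂ ≠ 0)
    (hw₁ : w₁ ≠ 0) (hw₂ : w₂ ≠ 0) {c₁ c₂ d₁ d₂ : ℝ}
    (h₁ : WeaklySeparates (B.filter (· ∈ halfplane v₁ c₁ ∩ halfplane v₂ c₂))
      (R.filter (c₁ ≤ ⟪v₁, ·⟫)) w₁ d₁)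
    (h₂ : WeaklySeparates (B.filter (· ∈ halfplane v₁ c₁ ∩ halfplane v₂ c₂))
      (R.filter (c₂ ≤ ⟪v₂, ·⟫)) w₂ d₂) :
    errSet R B (halfplane w₁ d₁ ∩ halfplane w₂ d₂) ⊆
      errSet R B (halfplane v₁ c₁ ∩ halfplane v₂ c₂) := by
  refine errSet_subset_errSet (fun x hxR hx => ?_) (fun x hxB hx => ?_)
  · rw [interior_wedge hw₁ hw₂] at hx
    rw [interior_wedge hv₁ hv₂]
    exact ⟨lt_of_not_ge fun h => (h₁.2 x (Finset.mem_filter.2 ⟨hxR, h⟩)).not_gt hx.1,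
      lt_of_not_ge fun h => (h₂.2 x (Finset.mem_filter.2 ⟨hxR, h⟩)).not_gt hx.2⟩
  · rw [closure_wedge] at hx ⊢
    have hxP := Finset.mem_filter.2 ⟨hxB, hx⟩
    exact ⟨h₁.1 x hxP, h₂.1 x hxP⟩

lemma one_lt_rank_pt : 1 < Module.rank ℝ Pt := by
  rw [← Module.finrank_eq_rank, finrank_euclideanSpace_fin]
  norm_num

theorem wedge_lines_through_red_and_blue_general (R B : Finset Pt)
    (v₁ v₂ : Pt) (c₁ c₂ : ℝ) (hv₁ : v₁ ≠ 0) (hv₂ : v₂ ≠ 0)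
    (hb : ∃ b ∈ B, b ∈ closure (halfplane v₁ c₁ ∩ halfplane v₂ c₂))
    (hr : ∃ r ∈ R, r ∉ interior (halfplane v₁ c₁ ∩ halfplane v₂ c₂)) :
    ∃ (v₁' v₂' : Pt) (c₁' c₂' : ℝ), v₁' ≠ 0 ∧ v₂' ≠ 0 ∧
      (∃ r ∈ R, (inner ℝ v₁' r : ℝ) = c₁') ∧ (∃ b ∈ B, (inner ℝ v₁' b : ℝ) = c₁') ∧
      (∃ r ∈ R, (inner ℝ v₂' r : ℝ) = c₂') ∧ (∃ b ∈ B, (inner ℝ v₂' b : ℝ) = c₂') ∧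
      errSet R B (halfplane v₁' c₁' ∩ halfplane v₂' c₂') ⊆
        errSet R B (halfplane v₁ c₁ ∩ halfplane v₂ c₂) := by
  obtain ⟨b, hbB, hbW⟩ := hb
  obtain ⟨r, hrR, hrW⟩ := hr
  rw [closure_wedge] at hbW
  rw [interior_wedge hv₁ hv₂] at hrW
  set P := B.filter (· ∈ halfplane v₁ c₁ ∩ halfplane v₂ c₂)
  set Q₁ := R.filter (c₁ ≤ ⟪v₁, ·⟫)
  set Q₂ := R.filter (c₂ ≤ ⟪v₂, ·⟫)
  have hP : P.Nonempty := ⟨b, Finset.mem_filter.2 ⟨hbB, hbW⟩⟩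
  have hQ : Q₁.Nonempty ∨ Q₂.Nonempty := by
    by_contra! h
    simp only [Finset.filter_eq_empty_iff, not_le, Q₁, Q₂] at h
    exact hrW ⟨h.1 hrR, h.2 hrR⟩
  have h₁ : WeaklySeparates P Q₁ v₁ c₁ :=
    ⟨fun p hp => (Finset.mem_filter.1 hp).2.1, fun q hq => (Finset.mem_filter.1 hq).2⟩
  have h₂ : WeaklySeparates P Q₂ v₂ c₂ :=
    ⟨fun p hp => (Finset.mem_filter.1 hp).2.2, fun q hq => (Finset.mem_filter.1 hq).2⟩
  obtain ⟨w₁, hw₁, w₂, hw₂, d₁, d₂, hsep₁, hsep₂, ⟨⟨p₁, hp₁, hp₁d⟩, ⟨q₁, hq₁, hq₁d⟩⟩,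
      ⟨⟨p₂, hp₂, hp₂d⟩, ⟨q₂, hq₂, hq₂d⟩⟩⟩ :=
    exists_passesThrough_pair one_lt_rank_pt hP hQ (Finset.filter_subset _ _)
      (Finset.filter_subset _ _) hv₁ hv₂ h₁ h₂
  exact ⟨w₁, w₂, d₁, d₂, hw₁, hw₂, ⟨q₁, hq₁, hq₁d⟩, ⟨p₁, Finset.filter_subset _ _ hp₁, hp₁d⟩,
    ⟨q₂, hq₂, hq₂d⟩, ⟨p₂, Finset.filter_subset _ _ hp₂, hp₂d⟩,
    errSet_wedge_subset hv₁ hv₂ hw₁ hw₂ hsep₁ hsep₂⟩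

/-- Any wedge that correctly classifies at least one blue and one red point can
be replaced by a wedge whose two boundary lines each pass through a red point
and a blue point, without misclassifying any additional points. -/
theorem wedge_lines_through_red_and_blue (R B : Finset Pt) (hgen : GenPos (B ∪ R))
    (v₁ v₂ : Pt) (c₁ c₂ : ℝ) (hv₁ : v₁ ≠ 0) (hv₂ : v₂ ≠ 0)
    (hb : ∃ b ∈ B, b ∈ closure (halfplane v₁ c₁ ∩ halfplane v₂ c₂))
    (hr : ∃ r ∈ R, r ∉ interior (halfplane v₁ c₁ ∩ halfplane v₂ c₂)) :
    ∃ (v₁' v₂' : Pt) (c₁' c₂' : ℝ), v₁' ≠ 0 ∧ v₂' ≠ 0 ∧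
      (∃ r ∈ R, (inner ℝ v₁' r : ℝ) = c₁') ∧ (∃ b ∈ B, (inner ℝ v₁' b : ℝ) = c₁') ∧
      (∃ r ∈ R, (inner ℝ v₂' r : ℝ) = c₂') ∧ (∃ b ∈ B, (inner ℝ v₂' b : ℝ) = c₂') ∧
      errSet R B (halfplane v₁' c₁' ∩ halfplane v₂' c₂') ⊆
        errSet R B (halfplane v₁ c₁ ∩ halfplane v₂ c₂) :=
  wedge_lines_through_red_and_blue_general R B v₁ v₂ c₁ c₂ hv₁ hv₂ hb hr
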